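/- arXiv:2409.09529 — 2 statements merged into one kernel-verified Lean document; each statement's English description precedes it below -/
import Mathlib

section
/- Let $0<r\le 1$, $\theta\in[0,2\pi]$, and set $a=(1-r)e^{i(\theta+r/2)}$. Then for every $z=\rho e^{i\alpha}$ in the Carleson square $S_r^\theta=\{\xi\in\mathbb{D}: 1-r<|\xi|<1,\ |\arg(\xi)-\theta|<r/2\}$, one has $|1-a\bar z|^2 \le 1+|a|^4-2|a|^2\cos(1-|a|)$. -/
/-!
Writing `a = s e^{i(θ + r/2)}` with `s = 1 - r` and `z = ρ e^{iα}`, one has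
`|1 - a z̄|² = 1 - 2 t cos φ + t²` with `t = sρ ∈ [s², s]` and `φ = θ + r/2 - α ∈ (0, r)`.
Since `cos φ ≥ cos r`, it suffices to bound the convex quadratic `t ↦ 1 - 2 t cos r + t²`
on `[s², s]`; its value at `s` does not exceed its value at `s²` because
`s + s² ≤ 2 - r² ≤ 2 cos r`.
-/

open Real

namespace CarlesonSquare

open Complex in
lemma ofReal_mul_exp_mul_conj (s x ρ α : ℝ) :
    (s : ℂ) * exp (I * x) * (starRingEnd ℂ) ((ρ : ℂ) * exp (I * α)) =
      ((s * ρ : ℝ) : ℂ) * exp ((x - α : ℝ) * I) := by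
  rw [map_mul, conj_ofReal, ← exp_conj, map_mul, conj_I, conj_ofReal, mul_mul_mul_comm,
    ← Complex.exp_add]
  push_cast
  ring_nf

open Complex in
lemma norm_one_sub_ofReal_mul_exp_sq (t φ : ℝ) :
    ‖1 - (t : ℂ) * exp (φ * I)‖ ^ 2 = 1 - 2 * t * Real.cos φ + t ^ 2 := by
  rw [Complex.sq_norm, normSq_apply]
  simp only [sub_re, sub_im, one_re, one_im, re_ofReal_mul, im_ofReal_mul,
    exp_ofReal_mul_I_re, exp_ofReal_mul_I_im]
  linear_combination t ^ 2 * Real.sin_sq_add_cos_sq φ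

lemma one_sub_add_sq_le_two_mul_cos {r : ℝ} (hr0 : 0 ≤ r) (hr : r ≤ 3 / 2) :
    (1 - r) + (1 - r) ^ 2 ≤ 2 * cos r := by
  nlinarith [one_sub_sq_div_two_le_cos (x := r)]

lemma one_sub_two_mul_add_sq_le {s t c : ℝ} (hst : s ^ 2 ≤ t) (hts : t ≤ s)
    (hc : s + s ^ 2 ≤ 2 * c) :
    1 - 2 * t * c + t ^ 2 ≤ 1 - 2 * s ^ 2 * c + s ^ 4 := by
  nlinarith [mul_nonneg (sub_nonneg.2 hst) (by linarith : 0 ≤ 2 * c - t - s ^ 2)]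

end CarlesonSquare

open CarlesonSquare

theorem stmt1_general (r θ : ℝ) (hr1 : r ≤ 1)
    (a : ℂ) (ha : a = (1 - r : ℝ) * Complex.exp (Complex.I * (θ + r / 2)))
    (ρ α : ℝ) (z : ℂ) (hz : z = (ρ : ℂ) * Complex.exp (Complex.I * α))
    (hρ0 : 1 - r < ρ) (hρ1 : ρ < 1) (hα : |α - θ| < r / 2) :
    ‖1 - a * (starRingEnd ℂ) z‖ ^ 2 ≤
      1 + ‖a‖ ^ 4 - 2 * ‖a‖ ^ 2 * Real.cos (1 - ‖a‖) := by
  have hs : 0 ≤ 1 - r := by linarith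
  have hθr : (θ : ℂ) + r / 2 = ((θ + r / 2 : ℝ) : ℂ) := by push_cast; ring
  rw [hθr] at ha
  have hnorm : ‖a‖ = 1 - r := by
    rw [ha, norm_mul, Complex.norm_exp_I_mul_ofReal, Complex.norm_real, norm_of_nonneg hs,
      mul_one]
  have hcos : cos r ≤ cos (θ + r / 2 - α) := by
    obtain ⟨hφ0, hφr⟩ := abs_lt.1 hα
    exact cos_le_cos_of_nonneg_of_le_pi (by linarith) (by linarith [pi_gt_three]) (by linarith)
  have ht : (1 - r) * ρ ≤ 1 - r := mul_le_of_le_one_right hs hρ1.le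
  have hst : (1 - r) ^ 2 ≤ (1 - r) * ρ := by
    rw [sq]; exact mul_le_mul_of_nonneg_left hρ0.le hs
  rw [hnorm, ha, hz, sub_sub_cancel, ofReal_mul_exp_mul_conj,
    norm_one_sub_ofReal_mul_exp_sq]
  calc 1 - 2 * ((1 - r) * ρ) * cos (θ + r / 2 - α) + ((1 - r) * ρ) ^ 2
      ≤ 1 - 2 * ((1 - r) * ρ) * cos r + ((1 - r) * ρ) ^ 2 := by
        linarith [mul_le_mul_of_nonneg_left hcos ((sq_nonneg _).trans hst)]
    _ ≤ 1 + (1 - r) ^ 4 - 2 * (1 - r) ^ 2 * cos r := by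
        linarith [one_sub_two_mul_add_sq_le hst ht
          (one_sub_add_sq_le_two_mul_cos (by linarith) (by linarith))]

theorem stmt1 (r θ : ℝ) (hr0 : 0 < r) (hr1 : r ≤ 1) (hθ : θ ∈ Set.Icc 0 (2 * π))
    (a : ℂ) (ha : a = (1 - r : ℝ) * Complex.exp (Complex.I * (θ + r / 2)))
    (ρ α : ℝ) (z : ℂ) (hz : z = (ρ : ℂ) * Complex.exp (Complex.I * α))
    (hρ0 : 1 - r < ρ) (hρ1 : ρ < 1) (hα : |α - θ| < r / 2) :
    ‖1 - a * (starRingEnd ℂ) z‖ ^ 2 ≤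
      1 + ‖a‖ ^ 4 - 2 * ‖a‖ ^ 2 * Real.cos (1 - ‖a‖) :=
  stmt1_general r θ hr1 a ha ρ α z hz hρ0 hρ1 hα
end

section
/- There exists $C_2>0$ such that for all $0<r\le 1$, $\theta\in[0,2\pi]$, with $a=(1-r)e^{i(\theta+r/2)}$, and all $z$ in the Carleson square $S_r^\theta$, the normalized Bergman kernel of the unit disc satisfies $|k_a(z)|^2=\left(\frac{1-|a|^2}{|1-a\bar z|^2}\right)^2 \ge \frac{C_2}{r^2}$. -/
open Real

/-!
Write `a z̄ = t e^{iφ}` with `t = (1 - r) ρ` and `|φ| ≤ r`. Since `1 - t` lies between `r` and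
`2r`, the distance `|1 - a z̄|` lies between `1 - t ≥ r` and `1 - t + |φ| ≤ 3r`, while
`1 - |a|² = r (2 - r) ≥ r`. Hence `|k_a(z)| ≥ r / (3r)² = 1 / (9r)`, and `C₂ = 1/81` works.
-/

namespace Complex

lemma norm_ofReal_mul_exp_I_mul {t : ℝ} (ht : 0 ≤ t) (φ : ℝ) :
    ‖(t : ℂ) * exp (I * φ)‖ = t := by
  rw [norm_mul, norm_exp_I_mul_ofReal, mul_one, norm_real, Real.norm_of_nonneg ht]

lemma ofReal_mul_exp_I_mul_mul_conj (s β t α : ℝ) :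
    (s : ℂ) * exp (I * β) * starRingEnd ℂ ((t : ℂ) * exp (I * α))
      = ((s * t : ℝ) : ℂ) * exp (I * (β - α : ℝ)) := by
  rw [map_mul, ← exp_conj, map_mul, conj_I, conj_ofReal, conj_ofReal,
    show I * ((β - α : ℝ) : ℂ) = I * β + -I * α by push_cast; ring, exp_add]
  push_cast
  ring

lemma one_sub_le_norm_one_sub_ofReal_mul_exp_I_mul {t : ℝ} (ht : 0 ≤ t) (φ : ℝ) :
    1 - t ≤ ‖1 - (t : ℂ) * exp (I * φ)‖ := by
  have h := norm_sub_norm_le (1 : ℂ) (t * exp (I * φ))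
  rwa [norm_one, norm_ofReal_mul_exp_I_mul ht] at h

lemma norm_one_sub_ofReal_mul_exp_I_mul_le {t : ℝ} (ht₀ : 0 ≤ t) (ht₁ : t ≤ 1) (φ : ℝ) :
    ‖1 - (t : ℂ) * exp (I * φ)‖ ≤ 1 - t + |φ| := by
  have hsplit :
      1 - (t : ℂ) * exp (I * φ) = ((1 - t : ℝ) : ℂ) + (t : ℂ) * (1 - exp (I * φ)) := by
    push_cast; ring
  have hexp : ‖1 - exp (I * φ)‖ ≤ |φ| := by
    simpa [norm_sub_rev] using Real.norm_exp_I_mul_ofReal_sub_one_le (x := φ)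
  calc ‖1 - (t : ℂ) * exp (I * φ)‖
      ≤ ‖((1 - t : ℝ) : ℂ)‖ + ‖(t : ℂ)‖ * ‖1 - exp (I * φ)‖ := by
        rw [hsplit, ← norm_mul]; exact norm_add_le _ _
    _ ≤ (1 - t) + 1 * |φ| := by
        rw [norm_real, norm_real, Real.norm_of_nonneg (by linarith), Real.norm_of_nonneg ht₀]
        gcongr
    _ = 1 - t + |φ| := by ring

end Complex

lemma one_div_eightyOne_div_sq_le_div_sq_sq {r A D : ℝ} (hr : 0 < r) (hA : r ≤ A) (hD₀ : 0 < D)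
    (hD : D ≤ 3 * r) :
    1 / 81 / r ^ 2 ≤ (A / D ^ 2) ^ 2 := by
  have h : 1 / (9 * r) ≤ A / D ^ 2 := by
    rw [div_le_div_iff₀ (by positivity) (by positivity)]
    nlinarith [mul_le_mul hD hD hD₀.le (by linarith)]
  calc 1 / 81 / r ^ 2 = (1 / (9 * r)) ^ 2 := by field_simp; ring
    _ ≤ (A / D ^ 2) ^ 2 := pow_le_pow_left₀ (by positivity) h 2

theorem stmt2 : ∃ C₂ > (0:ℝ), ∀ r θ : ℝ, 0 < r → r ≤ 1 → θ ∈ Set.Icc 0 (2 * π) →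
    ∀ a : ℂ, a = (1 - r : ℝ) * Complex.exp (Complex.I * (θ + r / 2)) →
    ∀ (ρ α : ℝ) (z : ℂ), z = (ρ : ℂ) * Complex.exp (Complex.I * α) →
    1 - r < ρ → ρ < 1 → |α - θ| < r / 2 →
    C₂ / r ^ 2 ≤ ((1 - ‖a‖ ^ 2) / ‖1 - a * (starRingEnd ℂ) z‖ ^ 2) ^ 2 := by
  refine ⟨1 / 81, by norm_num, fun r θ hr hr₁ _ a ha ρ α z hz hρ₁ hρ₂ hα => ?_⟩
  have hs : 0 ≤ 1 - r := by linarith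
  have hρ₀ : 0 < ρ := hs.trans_lt hρ₁
  have hnorm_a : ‖a‖ = 1 - r := by
    rw [ha, ← Complex.ofReal_ofNat, ← Complex.ofReal_div, ← Complex.ofReal_add]
    exact Complex.norm_ofReal_mul_exp_I_mul hs _
  have hprod : a * (starRingEnd ℂ) z
      = (((1 - r) * ρ : ℝ) : ℂ) * Complex.exp (Complex.I * (θ + r / 2 - α : ℝ)) := by
    rw [ha, hz, ← Complex.ofReal_ofNat, ← Complex.ofReal_div, ← Complex.ofReal_add]
    exact Complex.ofReal_mul_exp_I_mul_mul_conj _ _ _ _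
  have hφ : |θ + r / 2 - α| ≤ r := by
    rw [abs_le]; constructor <;> linarith [abs_lt.mp hα]
  have ht₁ : (1 - r) * (1 - r) ≤ (1 - r) * ρ := mul_le_mul_of_nonneg_left hρ₁.le hs
  have ht₂ : (1 - r) * ρ ≤ 1 - r := mul_le_of_le_one_right hs hρ₂.le
  have ht₀ : 0 ≤ (1 - r) * ρ := by positivity
  have hlower := Complex.one_sub_le_norm_one_sub_ofReal_mul_exp_I_mul ht₀ (θ + r / 2 - α)
  have hupper := Complex.norm_one_sub_ofReal_mul_exp_I_mul_le ht₀ (by linarith) (θ + r / 2 - α)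
  rw [hnorm_a, hprod]
  exact one_div_eightyOne_div_sq_le_div_sq_sq hr (by nlinarith) (by linarith) (by nlinarith)
end
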